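/- arXiv:1602.00913 — 2 statements merged into one kernel-verified Lean document; each statement's English description precedes it below -/
import Mathlib

section
/- Let G ⊂ SL(3,ℝ) be the subgroup of upper-triangular matrices g = [[x,t,v],[0,y,u],[0,0,z]] with xyz = 1, acting on 2×3 (or similar) data by the adjoint action induced on L(g̅/g ∧ g̅/g, g̅) where g̅ = sl(3,ℝ) and g its upper-triangular subalgebra. The subspace W of maps φ with φ(e₂₁∧e₃₁) = [[0,a,b],[0,0,0],[0,0,0]], φ(e₃₁∧e₃₂) = [[0,0,c],[0,0,d],[0,0,0]], φ(e₂₁∧e₃₂) = 0 (for a,b,c,d ∈ ℝ) is invariant under this G-action; explicitly, g·φ sends e₂₁∧e₃₁ to (x³/(y²z²))[[0, az, −au+by],[0,0,0],[0,0,0]] and e₃₁∧e₃₂ to (xy/z³)[[0,0,cx+dt],[0,0,dy],[0,0,0]]. -/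
open Matrix

/-- Elementary matrix E_ij (3×3, real). -/
noncomputable def Emat (i j : Fin 3) : Matrix (Fin 3) (Fin 3) ℝ :=
  Matrix.single i j 1

/-- The coordinates of `X + g` in the basis `e₂₁, e₃₁, e₃₂` of `sl(3,ℝ)/g`
(g the upper-triangular subalgebra): the below-diagonal entries of `X`. -/
noncomputable def lowCoords (X : Matrix (Fin 3) (Fin 3) ℝ) : ℝ × ℝ × ℝ :=
  (X 1 0, X 2 0, X 2 1)

/-- The element of `W ⊂ L(g̅/g ∧ g̅/g, g̅)` with parameters `(a,b,c,d)`,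
evaluated on a pair of cosets given in the coordinates `(e₂₁, e₃₁, e₃₂)`:
`e₂₁∧e₃₁ ↦ [[0,a,b],[0,0,0],[0,0,0]]`, `e₃₁∧e₃₂ ↦ [[0,0,c],[0,0,d],[0,0,0]]`,
`e₂₁∧e₃₂ ↦ 0`, extended bilinearly and alternatingly. -/
noncomputable def phiW (a b c d : ℝ) (p q : ℝ × ℝ × ℝ) :
    Matrix (Fin 3) (Fin 3) ℝ :=
  (p.1 * q.2.1 - p.2.1 * q.1) • !![0, a, b; 0, 0, 0; 0, 0, 0] +
  (p.2.1 * q.2.2 - p.2.2 * q.2.1) • !![0, 0, c; 0, 0, d; 0, 0, 0]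


/-! The matrix `ginv` is the adjugate of `g`, so every identity below except the final rescaling
holds without the condition `xyz = 1`. The coordinates of `Ad(g⁻¹)X + g` depend only on those of
`X + g`, and the two wedge coordinates of `e₂₁∧e₃₁` and `e₃₁∧e₃₂` that `φ_{a,b,c,d}` reads are
merely rescaled, by `x⁴yz` and `x³y³`; conjugation by `g` in turn keeps the two matrix shapes
of `W`. Hence `g·φ_{a,b,c,d} = φ_{a',b',c',d'}` for explicit polynomials `a', b', c', d'`. -/

section UpperTriangular

variable (x t v y u z : ℝ)

lemma lowCoords_conj (X : Matrix (Fin 3) (Fin 3) ℝ) :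
    lowCoords (!![y * z, -(t * z), t * u - y * v; 0, x * z, -(x * u); 0, 0, x * y]
        * X * !![x, t, v; 0, y, u; 0, 0, z]) =
      (x ^ 2 * (z * X 1 0 - u * X 2 0), x ^ 2 * y * X 2 0,
        x * y * (t * X 2 0 + y * X 2 1)) := by
  refine Prod.ext ?_ (Prod.ext ?_ ?_) <;>
    simp [lowCoords, Matrix.mul_apply, Matrix.vecMul, dotProduct, Fin.sum_univ_succ] <;> ring

lemma phiW_lowCoords_conj (a b c d : ℝ) (X Y : Matrix (Fin 3) (Fin 3) ℝ) :
    phiW a b c d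
        (lowCoords (!![y * z, -(t * z), t * u - y * v; 0, x * z, -(x * u); 0, 0, x * y]
          * X * !![x, t, v; 0, y, u; 0, 0, z]))
        (lowCoords (!![y * z, -(t * z), t * u - y * v; 0, x * z, -(x * u); 0, 0, x * y]
          * Y * !![x, t, v; 0, y, u; 0, 0, z])) =
      phiW (x ^ 4 * y * z * a) (x ^ 4 * y * z * b) (x ^ 3 * y ^ 3 * c) (x ^ 3 * y ^ 3 * d)
        (lowCoords X) (lowCoords Y) := by
  rw [lowCoords_conj, lowCoords_conj]
  ext i j
  fin_cases i <;> fin_cases j <;> simp [phiW, lowCoords] <;> ring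

lemma conj_phiW (a b c d : ℝ) (p q : ℝ × ℝ × ℝ) :
    !![x, t, v; 0, y, u; 0, 0, z] * phiW a b c d p q *
        !![y * z, -(t * z), t * u - y * v; 0, x * z, -(x * u); 0, 0, x * y] =
      phiW (x ^ 2 * z * a) (x ^ 2 * (y * b - u * a)) (x * y * (x * c + t * d)) (x * y ^ 2 * d)
        p q := by
  ext i j
  fin_cases i <;> fin_cases j <;> simp [phiW, Matrix.mul_apply, Fin.sum_univ_succ] <;> ring

lemma conj_phiW_lowCoords_conj (a b c d : ℝ) (X Y : Matrix (Fin 3) (Fin 3) ℝ) :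
    !![x, t, v; 0, y, u; 0, 0, z] *
        phiW a b c d
          (lowCoords (!![y * z, -(t * z), t * u - y * v; 0, x * z, -(x * u); 0, 0, x * y]
            * X * !![x, t, v; 0, y, u; 0, 0, z]))
          (lowCoords (!![y * z, -(t * z), t * u - y * v; 0, x * z, -(x * u); 0, 0, x * y]
            * Y * !![x, t, v; 0, y, u; 0, 0, z])) *
        !![y * z, -(t * z), t * u - y * v; 0, x * z, -(x * u); 0, 0, x * y] =
      phiW (x ^ 6 * y * z ^ 2 * a) (x ^ 6 * y * z * (y * b - u * a))
        (x ^ 4 * y ^ 4 * (x * c + t * d)) (x ^ 4 * y ^ 5 * d) (lowCoords X) (lowCoords Y) := by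
  rw [phiW_lowCoords_conj, conj_phiW]
  congr 1 <;> ring

end UpperTriangular

lemma phiW_e₂₁_e₃₁ (a b c d : ℝ) :
    phiW a b c d (lowCoords (Emat 1 0)) (lowCoords (Emat 2 0)) =
      !![0, a, b; 0, 0, 0; 0, 0, 0] := by
  simp [phiW, lowCoords, Emat]

lemma phiW_e₃₁_e₃₂ (a b c d : ℝ) :
    phiW a b c d (lowCoords (Emat 2 0)) (lowCoords (Emat 2 1)) =
      !![0, 0, c; 0, 0, d; 0, 0, 0] := by
  simp [phiW, lowCoords, Emat]

lemma phiW_e₂₁_e₃₂ (a b c d : ℝ) :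
    phiW a b c d (lowCoords (Emat 1 0)) (lowCoords (Emat 2 1)) = 0 := by
  simp [phiW, lowCoords, Emat]

/-- For `g = [[x,t,v],[0,y,u],[0,0,z]] ∈ G ⊂ SL(3,ℝ)` (xyz = 1),
the induced action `(g·φ)(X∧Y) = Ad(g) φ(Ad(g⁻¹)X ∧ Ad(g⁻¹)Y)` on
`L(g̅/g ∧ g̅/g, g̅)` leaves the subspace `W` invariant; explicitly, for
`φ = φ_{a,b,c,d} ∈ W`, `g·φ` sends `e₂₁∧e₃₁` to
`(x³/(y²z²))·[[0, az, −au+by],0,0]`, `e₃₁∧e₃₂` to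
`(xy/z³)·[[0,0,cx+dt],[0,0,dy],0]`, and `e₂₁∧e₃₂` to `0`. -/
theorem stmt6 (x t v y u z a b c d : ℝ) (hdet : x * y * z = 1) :
    let g : Matrix (Fin 3) (Fin 3) ℝ := !![x, t, v; 0, y, u; 0, 0, z]
    let ginv : Matrix (Fin 3) (Fin 3) ℝ :=
      !![y * z, -(t * z), t * u - y * v; 0, x * z, -(x * u); 0, 0, x * y]
    let act : Matrix (Fin 3) (Fin 3) ℝ → Matrix (Fin 3) (Fin 3) ℝ →
        Matrix (Fin 3) (Fin 3) ℝ := fun X Y =>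
      g * phiW a b c d (lowCoords (ginv * X * g)) (lowCoords (ginv * Y * g)) * ginv
    act (Emat 1 0) (Emat 2 0)
        = (x ^ 3 / (y ^ 2 * z ^ 2)) • !![0, a * z, -(a * u) + b * y; 0, 0, 0; 0, 0, 0] ∧
    act (Emat 2 0) (Emat 2 1)
        = (x * y / z ^ 3) • !![0, 0, c * x + d * t; 0, 0, d * y; 0, 0, 0] ∧
    act (Emat 1 0) (Emat 2 1) = 0 ∧
    ∃ a' b' c' d' : ℝ, ∀ X Y : Matrix (Fin 3) (Fin 3) ℝ,
      act X Y = phiW a' b' c' d' (lowCoords X) (lowCoords Y) := by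
  intro g ginv act
  have hact : ∀ X Y, act X Y = phiW (x ^ 6 * y * z ^ 2 * a) (x ^ 6 * y * z * (y * b - u * a))
      (x ^ 4 * y ^ 4 * (x * c + t * d)) (x ^ 4 * y ^ 5 * d) (lowCoords X) (lowCoords Y) :=
    conj_phiW_lowCoords_conj x t v y u z a b c d
  have hy : y ≠ 0 := by rintro rfl; simp at hdet
  have hz : z ≠ 0 := by rintro rfl; simp at hdet
  have hscale₁ : x ^ 3 / (y ^ 2 * z ^ 2) = x ^ 5 := by
    rw [div_eq_iff (by positivity)]
    linear_combination (-x ^ 3 * (x * y * z + 1)) * hdet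
  have hscale₂ : x * y / z ^ 3 = x ^ 4 * y ^ 4 := by
    rw [div_eq_iff (by positivity)]
    linear_combination (-x * y * ((x * y * z) ^ 2 + x * y * z + 1)) * hdet
  refine ⟨?_, ?_, ?_, _, _, _, _, hact⟩
  · rw [hact, phiW_e₂₁_e₃₁, hscale₁]
    simp only [Matrix.smul_of, Matrix.smul_cons, smul_eq_mul, Matrix.smul_empty, mul_zero]
    rw [show x ^ 6 * y * z ^ 2 * a = x ^ 5 * (a * z) by linear_combination x ^ 5 * z * a * hdet,
      show x ^ 6 * y * z * (y * b - u * a) = x ^ 5 * (-(a * u) + b * y) by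
        linear_combination x ^ 5 * (y * b - u * a) * hdet]
  · rw [hact, phiW_e₃₁_e₃₂, hscale₂]
    simp only [Matrix.smul_of, Matrix.smul_cons, smul_eq_mul, Matrix.smul_empty, mul_zero]
    ring_nf
  · rw [hact, phiW_e₂₁_e₃₂]
end

section
/- With G the upper-triangular subgroup of SL(3,ℝ) acting on the 4-dimensional space W (parametrized by (a,b,c,d)) as in the formula g·φ with e₂₁∧e₃₁ ↦ (x³/(y²z²))[[0,az,−au+by],...] and e₃₁∧e₃₂ ↦ (xy/z³)[[0,0,cx+dt],[0,0,dy],...], the only G-invariant element of W is 0. -/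
open Matrix

/-- the only element of `W` invariant under the whole
upper-triangular group `G ⊂ SL(3,ℝ)` (acting by
`(g·φ)(X∧Y) = Ad(g) φ(Ad(g⁻¹)X ∧ Ad(g⁻¹)Y)`) is `0`. -/
theorem stmt7 (a b c d : ℝ)
    (h : ∀ x t v y u z : ℝ, x * y * z = 1 →
      ∀ X Y : Matrix (Fin 3) (Fin 3) ℝ,
        (!![x, t, v; 0, y, u; 0, 0, z] : Matrix (Fin 3) (Fin 3) ℝ) *
            phiW a b c d
              (lowCoords
                (!![y * z, -(t * z), t * u - y * v; 0, x * z, -(x * u); 0, 0, x * y] *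
                  X * !![x, t, v; 0, y, u; 0, 0, z]))
              (lowCoords
                (!![y * z, -(t * z), t * u - y * v; 0, x * z, -(x * u); 0, 0, x * y] *
                  Y * !![x, t, v; 0, y, u; 0, 0, z])) *
          !![y * z, -(t * z), t * u - y * v; 0, x * z, -(x * u); 0, 0, x * y]
        = phiW a b c d (lowCoords X) (lowCoords Y)) :
    a = 0 ∧ b = 0 ∧ c = 0 ∧ d = 0 := by
  have h1 := h 2 0 0 1 0 (1/2) (by norm_num)
    !![0,0,0;1,0,0;0,0,0] !![0,0,0;0,0,0;1,0,0]
  have h2 := h 2 0 0 1 0 (1/2) (by norm_num)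
    !![0,0,0;0,0,0;1,0,0] !![0,0,0;0,0,0;0,1,0]
  have ea := congrFun (congrFun h1 0) 1
  have eb := congrFun (congrFun h1 0) 2
  have ec := congrFun (congrFun h2 0) 2
  have ed := congrFun (congrFun h2 1) 2
  simp [phiW, lowCoords, Matrix.mul_apply, Fin.sum_univ_three, Matrix.vecHead, Matrix.vecTail] at ea eb ec ed
  refine ⟨by linarith, by linarith, by linarith, by linarith⟩
end
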